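/- arXiv:2310.01655 — 3 statements merged into one kernel-verified Lean document; each statement's English description precedes it below -/
import Mathlib

section
/- Let t ≥ 2 be an even integer, ε ∈ (0, 1/5] and δ ∈ (0, 1). Let S be a random d×r real matrix satisfying both the (ε, δ, t)-approximate-bilinear property and the (ε, δ, 2t)-approximate-bilinear property. Then for any fixed matrices C ∈ ℝ^{n×d} and D ∈ ℝ^{m×d}, the random variable X := ‖(CS)^{⊗2}((DS)^{⊗2})^⊤ − C^{⊗2}(D^{⊗2})^⊤‖_F satisfies ‖X‖_{L^t} ≤ √5 · ε · δ^{1/t} · ‖C^{⊗2}‖_F · ‖D^{⊗2}‖_F. -/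
open MeasureTheory Matrix

/-- The `L^t` norm of a real random variable: `(E[|X|^t])^(1/t)`. -/
noncomputable def Lnorm {Ω : Type*} [MeasurableSpace Ω] (μ : Measure Ω) (t : ℝ)
    (X : Ω → ℝ) : ℝ :=
  (∫ ω, |X ω| ^ t ∂μ) ^ (1 / t)

/-- Euclidean (ℓ₂) norm of a vector. -/
noncomputable def norm2 {d : ℕ} (x : Fin d → ℝ) : ℝ := Real.sqrt (∑ i, (x i) ^ 2)

/-- Frobenius norm of a matrix. -/
noncomputable def frob {n m : Type*} [Fintype n] [Fintype m] (M : Matrix n m ℝ) : ℝ :=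
  Real.sqrt (∑ i, ∑ j, (M i j) ^ 2)

/-- Self-tensor of a vector: `(a^{⊗2})_{(i,j)} = a_i a_j`. -/
def tensor2 {m : ℕ} (a : Fin m → ℝ) : Fin m × Fin m → ℝ := fun p => a p.1 * a p.2

/-- Row-wise self-tensoring of a matrix: each row `c_i` is replaced by `c_i^{⊗2}`. -/
def tensor2M {n m : ℕ} (C : Matrix (Fin n) (Fin m) ℝ) : Matrix (Fin n) (Fin m × Fin m) ℝ :=
  Matrix.of fun i => tensor2 (C i)

/-- A random `d × r` matrix `S` satisfies the `(ε, δ, t)`-approximate-bilinear property if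
for all `x, y ∈ ℝ^d`, `‖⟨Sᵀx, Sᵀy⟩ − ⟨x, y⟩‖_{L^t} ≤ ε δ^{1/t} ‖x‖₂ ‖y‖₂`. -/
def ApproxBilinear {Ω : Type*} [MeasurableSpace Ω] (μ : Measure Ω) (ε δ : ℝ) (t : ℕ)
    {d r : ℕ} (S : Ω → Matrix (Fin d) (Fin r) ℝ) : Prop :=
  ∀ x y : Fin d → ℝ,
    Lnorm μ (t : ℝ) (fun ω => dotProduct ((S ω)ᵀ *ᵥ x) ((S ω)ᵀ *ᵥ y) - dotProduct x y)
      ≤ ε * δ ^ ((1 : ℝ) / t) * norm2 x * norm2 y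

/-! The `(i, j)` entry of `(CS)^{⊗2}((DS)^{⊗2})ᵀ − C^{⊗2}(D^{⊗2})ᵀ` is `Z² + 2bZ`, where
`b = ⟨cᵢ, dⱼ⟩` and `Z = ⟨Sᵀcᵢ, Sᵀdⱼ⟩ − b`. By Minkowski's inequality in `L^{t/2}`, the `L^t` norm
of the Frobenius norm is at most the ℓ² norm of the entrywise `L^t` norms, and
`‖Z² + 2bZ‖_t ≤ ‖Z‖_{2t}² + 2|b| ‖Z‖_t ≤ (ε² + 2ε) δ^{1/t} ‖cᵢ‖² ‖dⱼ‖²` by the two moment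
hypotheses and Cauchy–Schwarz. Since `‖C^{⊗2}‖_F² = ∑ᵢ ‖cᵢ‖⁴`, summing gives the bound with
`ε² + 2ε ≤ √5 ε` for `ε ≤ 1/5`.

`Lnorm` is `0` whenever `|X|^t` is not integrable, so the hypotheses say nothing until `Z ∈ L^{2t}`.
This follows once the left-hand side is finite, because `Z² ≤ 2|Z² + 2bZ| + 4b²`. -/

open scoped ENNReal


section Lp

variable {Ω : Type*} [MeasurableSpace Ω] {μ : Measure Ω}

lemma Lnorm_eq_toReal_eLpNorm {p : ℝ} (hp : 0 < p) {X : Ω → ℝ}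
    (hX : AEStronglyMeasurable X μ) :
    Lnorm μ p X = (eLpNorm X (ENNReal.ofReal p) μ).toReal := by
  rw [eLpNorm_eq_lintegral_rpow_enorm_toReal (by simpa using hp) ENNReal.ofReal_ne_top,
    ENNReal.toReal_ofReal hp.le, ← ENNReal.toReal_rpow, Lnorm,
    integral_eq_lintegral_of_nonneg_ae (.of_forall fun ω => by positivity)
      (hX.aemeasurable.abs.pow_const p).aestronglyMeasurable]
  congr 2
  refine lintegral_congr fun ω => ?_
  rw [← Real.norm_eq_abs, ← ofReal_norm, ENNReal.ofReal_rpow_of_nonneg (norm_nonneg _) hp.le]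

lemma Lnorm_le_of_eLpNorm_le {p : ℝ} (hp : 0 < p) {X : Ω → ℝ} (hX : AEStronglyMeasurable X μ)
    {c : ℝ} (hc : 0 ≤ c)
    (h : MemLp X (ENNReal.ofReal p) μ → eLpNorm X (ENNReal.ofReal p) μ ≤ ENNReal.ofReal c) :
    Lnorm μ p X ≤ c := by
  rw [Lnorm_eq_toReal_eLpNorm hp hX]
  by_cases hX' : MemLp X (ENNReal.ofReal p) μ
  · exact ENNReal.toReal_le_of_le_ofReal hc (h hX')
  · have htop : eLpNorm X (ENNReal.ofReal p) μ = ⊤ := not_lt_top_iff.mp fun hlt => hX' ⟨hX, hlt⟩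
    rw [htop, ENNReal.toReal_top]
    exact hc

lemma eLpNorm_sq (f : Ω → ℝ) (p : ℝ≥0∞) :
    eLpNorm (fun ω => f ω ^ 2) p μ = eLpNorm f (2 * p) μ ^ 2 := by
  have h := eLpNorm_norm_rpow (μ := μ) (p := p) f two_pos
  simp only [Real.norm_eq_abs, Real.rpow_two, sq_abs, ENNReal.ofReal_ofNat] at h
  rw [h, mul_comm, ENNReal.rpow_two]

lemma eLpNorm_sq_add_mul_le {Z : Ω → ℝ} (hZ : AEStronglyMeasurable Z μ) (b : ℝ)
    {p : ℝ≥0∞} (hp : 1 ≤ p) {α β : ℝ} (hα₀ : 0 ≤ α) (hβ₀ : 0 ≤ β)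
    (hZp : eLpNorm Z p μ ≤ ENNReal.ofReal α) (hZ2p : eLpNorm Z (2 * p) μ ≤ ENNReal.ofReal β) :
    eLpNorm (fun ω => Z ω ^ 2 + 2 * b * Z ω) p μ ≤ ENNReal.ofReal (β ^ 2 + 2 * |b| * α) := by
  have hsplit : (fun ω => Z ω ^ 2 + 2 * b * Z ω) = (fun ω => Z ω ^ 2) + (2 * b) • Z := rfl
  calc eLpNorm (fun ω => Z ω ^ 2 + 2 * b * Z ω) p μ
      ≤ eLpNorm (fun ω => Z ω ^ 2) p μ + eLpNorm ((2 * b) • Z) p μ := by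
        rw [hsplit]; exact eLpNorm_add_le (hZ.pow 2) (hZ.const_smul _) hp
    _ = eLpNorm Z (2 * p) μ ^ 2 + ENNReal.ofReal (2 * |b|) * eLpNorm Z p μ := by
        rw [eLpNorm_sq, eLpNorm_const_smul, ← ofReal_norm, Real.norm_eq_abs, abs_mul, abs_two]
    _ ≤ ENNReal.ofReal β ^ 2 + ENNReal.ofReal (2 * |b|) * ENNReal.ofReal α := by gcongr
    _ ≤ ENNReal.ofReal (β ^ 2 + 2 * |b| * α) := by
        rw [← ENNReal.ofReal_pow hβ₀, ← ENNReal.ofReal_mul (by positivity : (0:ℝ) ≤ 2 * |b|),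
          ← ENNReal.ofReal_add (by positivity) (by positivity)]

lemma MemLp.of_abs_sq_add_mul_le [IsFiniteMeasure μ] {Z F : Ω → ℝ} {p : ℝ≥0∞} (b : ℝ)
    (hZ : AEStronglyMeasurable Z μ) (hF : MemLp F p μ)
    (h : ∀ ω, |Z ω ^ 2 + 2 * b * Z ω| ≤ F ω) : MemLp Z (2 * p) μ := by
  have hsq : MemLp (fun ω => Z ω ^ 2) p μ := by
    refine ((hF.const_mul 2).add (memLp_const (4 * b ^ 2))).mono' (hZ.pow 2)
      (.of_forall fun ω => ?_)
    have := (abs_le.mp (h ω)).2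
    rw [Pi.add_apply, Real.norm_eq_abs, abs_of_nonneg (sq_nonneg _)]
    nlinarith [sq_nonneg (Z ω + 2 * b)]
  refine ⟨hZ, ?_⟩
  have := hsq.eLpNorm_lt_top
  rw [eLpNorm_sq] at this
  exact (ENNReal.pow_lt_top_iff.mp this).resolve_right two_ne_zero

lemma eLpNorm_frob_le {ι κ : Type*} [Fintype ι] [Fintype κ] {M : Ω → Matrix ι κ ℝ}
    {A : Matrix ι κ ℝ} {p : ℝ≥0∞} (hp : 2 ≤ p)
    (hM : ∀ i j, AEStronglyMeasurable (fun ω => M ω i j) μ) (hA₀ : ∀ i j, 0 ≤ A i j)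
    (hA : ∀ i j, eLpNorm (fun ω => M ω i j) p μ ≤ ENNReal.ofReal (A i j)) :
    eLpNorm (fun ω => frob (M ω)) p μ ≤ ENNReal.ofReal (frob A) := by
  set q := p * ENNReal.ofReal (1 / 2) with hq_def
  have hq : 2 * q = p := by
    rw [hq_def, mul_comm, mul_assoc, ← ENNReal.ofReal_ofNat 2, ← ENNReal.ofReal_mul (by norm_num)]
    norm_num
  have hq₁ : 1 ≤ q := by
    rw [← hq] at hp
    exact (ENNReal.mul_le_mul_iff_right two_ne_zero ENNReal.ofNat_ne_top).mp (by simpa using hp)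
  have hsum : eLpNorm (fun ω => ∑ k : ι × κ, M ω k.1 k.2 ^ 2) q μ
      ≤ ENNReal.ofReal (∑ k : ι × κ, A k.1 k.2 ^ 2) := by
    calc eLpNorm (fun ω => ∑ k : ι × κ, M ω k.1 k.2 ^ 2) q μ
        ≤ ∑ k : ι × κ, eLpNorm (fun ω => M ω k.1 k.2 ^ 2) q μ := by
          rw [← Finset.sum_fn]
          exact eLpNorm_sum_le (fun k _ => (hM k.1 k.2).pow 2) hq₁
      _ = ∑ k : ι × κ, eLpNorm (fun ω => M ω k.1 k.2) p μ ^ 2 := by simp only [eLpNorm_sq, hq]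
      _ ≤ ∑ k : ι × κ, ENNReal.ofReal (A k.1 k.2 ^ 2) := by
          gcongr with k
          rw [ENNReal.ofReal_pow (hA₀ _ _)]
          gcongr
          exact hA k.1 k.2
      _ = ENNReal.ofReal (∑ k : ι × κ, A k.1 k.2 ^ 2) :=
          (ENNReal.ofReal_sum_of_nonneg fun k _ => sq_nonneg _).symm
  have hfrob (B : Matrix ι κ ℝ) : frob B = ‖∑ k : ι × κ, B k.1 k.2 ^ 2‖ ^ (1 / 2 : ℝ) := by
    rw [frob, Real.sqrt_eq_rpow, Real.norm_of_nonneg (by positivity), Fintype.sum_prod_type]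
  simp only [hfrob]
  rw [eLpNorm_norm_rpow _ (by norm_num), Real.norm_of_nonneg (by positivity),
    ← ENNReal.ofReal_rpow_of_nonneg (by positivity) (by norm_num)]
  exact ENNReal.rpow_le_rpow hsum (by norm_num)

end Lp

def bilinError {d r : ℕ} (S : Matrix (Fin d) (Fin r) ℝ) (x y : Fin d → ℝ) : ℝ :=
  (Sᵀ *ᵥ x) ⬝ᵥ (Sᵀ *ᵥ y) - x ⬝ᵥ y

lemma measurable_bilinError {Ω : Type*} [MeasurableSpace Ω] {d r : ℕ}
    {S : Ω → Matrix (Fin d) (Fin r) ℝ} (hS : ∀ i j, Measurable fun ω => S ω i j)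
    (x y : Fin d → ℝ) : Measurable fun ω => bilinError (S ω) x y := by
  simp only [bilinError, dotProduct, mulVec, transpose_apply]
  fun_prop

lemma tensor2M_mul_transpose_apply {n m k : ℕ} (A : Matrix (Fin n) (Fin k) ℝ)
    (B : Matrix (Fin m) (Fin k) ℝ) (i : Fin n) (j : Fin m) :
    (tensor2M A * (tensor2M B)ᵀ) i j = (A i ⬝ᵥ B j) ^ 2 := by
  simp only [mul_apply, transpose_apply, tensor2M, of_apply, tensor2, Fintype.sum_prod_type,
    dotProduct, sq, Finset.sum_mul_sum]
  exact Finset.sum_congr rfl fun _ _ => Finset.sum_congr rfl fun _ _ => by ring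

lemma tensor2M_mul_sub_apply {n m d r : ℕ} (S : Matrix (Fin d) (Fin r) ℝ)
    (C : Matrix (Fin n) (Fin d) ℝ) (D : Matrix (Fin m) (Fin d) ℝ) (i : Fin n) (j : Fin m) :
    (tensor2M (C * S) * (tensor2M (D * S))ᵀ - tensor2M C * (tensor2M D)ᵀ) i j
      = bilinError S (C i) (D j) ^ 2 + 2 * (C i ⬝ᵥ D j) * bilinError S (C i) (D j) := by
  rw [Matrix.sub_apply, tensor2M_mul_transpose_apply, tensor2M_mul_transpose_apply,
    mul_apply_eq_vecMul, mul_apply_eq_vecMul, ← mulVec_transpose, ← mulVec_transpose,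
    bilinError]
  ring

lemma abs_dotProduct_le {d : ℕ} (x y : Fin d → ℝ) : |x ⬝ᵥ y| ≤ norm2 x * norm2 y := by
  rw [norm2, norm2, ← Real.sqrt_mul (by positivity), ← Real.sqrt_sq_eq_abs]
  exact Real.sqrt_le_sqrt (Finset.sum_mul_sq_le_sq_mul_sq _ x y)

lemma frob_nonneg {ι κ : Type*} [Fintype ι] [Fintype κ] (M : Matrix ι κ ℝ) : 0 ≤ frob M :=
  Real.sqrt_nonneg _

lemma abs_apply_le_frob {ι κ : Type*} [Fintype ι] [Fintype κ] (M : Matrix ι κ ℝ) (i : ι)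
    (j : κ) : |M i j| ≤ frob M := by
  rw [frob, ← Real.sqrt_sq_eq_abs]
  refine Real.sqrt_le_sqrt ?_
  calc M i j ^ 2 ≤ ∑ j', M i j' ^ 2 :=
        Finset.single_le_sum (fun _ _ => sq_nonneg _) (Finset.mem_univ j)
    _ ≤ ∑ i', ∑ j', M i' j' ^ 2 :=
        Finset.single_le_sum (f := fun i' => ∑ j', M i' j' ^ 2)
          (fun _ _ => Finset.sum_nonneg fun _ _ => sq_nonneg _) (Finset.mem_univ i)

lemma frob_smul {ι κ : Type*} [Fintype ι] [Fintype κ] (c : ℝ) (M : Matrix ι κ ℝ) :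
    frob (c • M) = |c| * frob M := by
  simp only [frob, Matrix.smul_apply, smul_eq_mul, mul_pow, ← Finset.mul_sum]
  rw [Real.sqrt_mul (sq_nonneg c), Real.sqrt_sq_eq_abs]

lemma frob_vecMulVec {n m : ℕ} (a : Fin n → ℝ) (b : Fin m → ℝ) :
    frob (vecMulVec a b) = norm2 a * norm2 b := by
  simp only [frob, norm2, vecMulVec_apply, mul_pow, ← Finset.mul_sum, ← Finset.sum_mul]
  exact Real.sqrt_mul (Finset.sum_nonneg fun _ _ => sq_nonneg _) _

lemma frob_tensor2M {n d : ℕ} (C : Matrix (Fin n) (Fin d) ℝ) :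
    frob (tensor2M C) = norm2 fun i => norm2 (C i) ^ 2 := by
  rw [frob, norm2]
  congr 1
  refine Finset.sum_congr rfl fun i _ => ?_
  rw [norm2, Real.sq_sqrt (by positivity), sq, Finset.sum_mul_sum, Fintype.sum_prod_type]
  simp only [tensor2M, of_apply, tensor2, mul_pow]

lemma sq_add_two_mul_le_sqrt_five_mul {ε : ℝ} (hε₀ : 0 ≤ ε) (hε : ε ≤ 1 / 5) :
    ε ^ 2 + 2 * ε ≤ Real.sqrt 5 * ε := by
  have h : ε + 2 ≤ Real.sqrt 5 := Real.le_sqrt_of_sq_le (by nlinarith)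
  nlinarith

section Sketch

variable {Ω : Type*} [MeasurableSpace Ω] {μ : Measure Ω} {ε δ : ℝ} {t d r : ℕ}
  {S : Ω → Matrix (Fin d) (Fin r) ℝ}

lemma ApproxBilinear.eLpNorm_le (h : ApproxBilinear μ ε δ t S) (ht : t ≠ 0)
    {x y : Fin d → ℝ} (hxy : MemLp (fun ω => bilinError (S ω) x y) t μ) :
    eLpNorm (fun ω => bilinError (S ω) x y) t μ
      ≤ ENNReal.ofReal (ε * δ ^ ((1 : ℝ) / t) * norm2 x * norm2 y) := by
  have hL : Lnorm μ t (fun ω => bilinError (S ω) x y) ≤ _ := h x y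
  rw [Lnorm_eq_toReal_eLpNorm (by positivity) hxy.1, ENNReal.ofReal_natCast] at hL
  rw [← ENNReal.ofReal_toReal hxy.eLpNorm_ne_top]
  exact ENNReal.ofReal_le_ofReal hL

lemma eLpNorm_bilinError_sq_add_mul_le [IsFiniteMeasure μ] (hε : 0 ≤ ε) (hδ : 0 ≤ δ)
    (ht : t ≠ 0) (hJL : ApproxBilinear μ ε δ t S) (hJL2 : ApproxBilinear μ ε δ (2 * t) S)
    {x y : Fin d → ℝ} (hxy : MemLp (fun ω => bilinError (S ω) x y) (2 * t) μ) :
    eLpNorm (fun ω => bilinError (S ω) x y ^ 2 + 2 * (x ⬝ᵥ y) * bilinError (S ω) x y) t μ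
      ≤ ENNReal.ofReal ((ε ^ 2 + 2 * ε) * δ ^ ((1 : ℝ) / t) * (norm2 x ^ 2 * norm2 y ^ 2)) := by
  have h2t : ((2 * t : ℕ) : ℝ≥0∞) = 2 * t := by push_cast; rfl
  have hxy' : MemLp (fun ω => bilinError (S ω) x y) t μ :=
    hxy.mono_exponent (by rw [two_mul]; exact le_add_self)
  have hZt := hJL.eLpNorm_le ht hxy'
  have hZ2t := hJL2.eLpNorm_le (by positivity) (by rwa [h2t])
  rw [h2t] at hZ2t
  have hx : 0 ≤ norm2 x := Real.sqrt_nonneg _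
  have hy : 0 ≤ norm2 y := Real.sqrt_nonneg _
  refine (eLpNorm_sq_add_mul_le hxy.1 _ (by exact_mod_cast Nat.one_le_iff_ne_zero.mpr ht)
    (mul_nonneg (mul_nonneg (by positivity) hx) hy) (mul_nonneg (mul_nonneg (by positivity) hx) hy)
    hZt hZ2t).trans (ENNReal.ofReal_le_ofReal ?_)
  have hδ2 : (δ ^ ((1 : ℝ) / ((2 * t : ℕ) : ℝ))) ^ 2 = δ ^ ((1 : ℝ) / t) := by
    rw [← Real.rpow_natCast, ← Real.rpow_mul hδ]
    push_cast
    field_simp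
  calc (ε * δ ^ ((1 : ℝ) / ((2 * t : ℕ) : ℝ)) * norm2 x * norm2 y) ^ 2
        + 2 * |x ⬝ᵥ y| * (ε * δ ^ ((1 : ℝ) / t) * norm2 x * norm2 y)
      ≤ (ε * δ ^ ((1 : ℝ) / ((2 * t : ℕ) : ℝ)) * norm2 x * norm2 y) ^ 2
        + 2 * (norm2 x * norm2 y) * (ε * δ ^ ((1 : ℝ) / t) * norm2 x * norm2 y) := by
        gcongr
        exact abs_dotProduct_le x y
    _ = (ε ^ 2 + 2 * ε) * δ ^ ((1 : ℝ) / t) * (norm2 x ^ 2 * norm2 y ^ 2) := by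
        rw [mul_pow, mul_pow, mul_pow, hδ2]
        ring

end Sketch

theorem tensoring_Lt_bound_general {Ω : Type*} [MeasurableSpace Ω] (μ : Measure Ω)
    [IsProbabilityMeasure μ]
    {d r n m : ℕ} (t : ℕ) (ht : 2 ≤ t)
    (ε δ : ℝ) (hε0 : 0 < ε) (hε : ε ≤ 1 / 5) (hδ0 : 0 < δ)
    (S : Ω → Matrix (Fin d) (Fin r) ℝ) (hSmeas : ∀ i j, Measurable fun ω => S ω i j)
    (hJL : ApproxBilinear μ ε δ t S) (hJL2 : ApproxBilinear μ ε δ (2 * t) S)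
    (C : Matrix (Fin n) (Fin d) ℝ) (D : Matrix (Fin m) (Fin d) ℝ) :
    Lnorm μ (t : ℝ)
        (fun ω =>
          frob (tensor2M (C * S ω) * (tensor2M (D * S ω))ᵀ - tensor2M C * (tensor2M D)ᵀ))
      ≤ Real.sqrt 5 * ε * δ ^ ((1 : ℝ) / t) * frob (tensor2M C) * frob (tensor2M D) := by
  set M : Ω → Matrix (Fin n) (Fin m) ℝ := fun ω =>
    tensor2M (C * S ω) * (tensor2M (D * S ω))ᵀ - tensor2M C * (tensor2M D)ᵀ
  have hM (i j) : (fun ω => M ω i j) = fun ω => bilinError (S ω) (C i) (D j) ^ 2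
      + 2 * (C i ⬝ᵥ D j) * bilinError (S ω) (C i) (D j) :=
    funext fun ω => tensor2M_mul_sub_apply (S ω) C D i j
  have hMmeas (i j) : Measurable fun ω => M ω i j := by
    have := measurable_bilinError hSmeas (C i) (D j)
    rw [hM]
    fun_prop
  have hFmeas : Measurable fun ω => frob (M ω) := by
    unfold frob
    fun_prop
  refine Lnorm_le_of_eLpNorm_le (by positivity) hFmeas.aestronglyMeasurable
    (mul_nonneg (mul_nonneg (by positivity) (frob_nonneg _)) (frob_nonneg _)) fun hF => ?_
  rw [ENNReal.ofReal_natCast] at hF ⊢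
  have hZ (i j) : MemLp (fun ω => bilinError (S ω) (C i) (D j)) (2 * t) μ :=
    MemLp.of_abs_sq_add_mul_le _ (measurable_bilinError hSmeas _ _).aestronglyMeasurable hF
      fun ω => congrFun (hM i j) ω ▸ abs_apply_le_frob (M ω) i j
  set k := (ε ^ 2 + 2 * ε) * δ ^ ((1 : ℝ) / t)
  refine (eLpNorm_frob_le (M := M)
    (A := k • vecMulVec (fun i => norm2 (C i) ^ 2) (fun j => norm2 (D j) ^ 2))
    (by exact_mod_cast ht) (fun i j => (hMmeas i j).aestronglyMeasurable)
    (fun i j => by simp only [Matrix.smul_apply, vecMulVec_apply, smul_eq_mul]; positivity)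
    (fun i j => by
      simp only [hM, Matrix.smul_apply, vecMulVec_apply, smul_eq_mul]
      exact eLpNorm_bilinError_sq_add_mul_le hε0.le hδ0.le (by omega) hJL hJL2 (hZ i j))).trans
    (ENNReal.ofReal_le_ofReal ?_)
  have hk : |k| ≤ Real.sqrt 5 * ε * δ ^ ((1 : ℝ) / t) := by
    rw [abs_of_nonneg (by positivity)]
    exact mul_le_mul_of_nonneg_right (sq_add_two_mul_le_sqrt_five_mul hε0.le hε) (by positivity)
  rw [frob_smul, frob_vecMulVec, ← frob_tensor2M, ← frob_tensor2M, mul_assoc]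
  exact mul_le_mul_of_nonneg_right hk (mul_nonneg (frob_nonneg _) (frob_nonneg _))

theorem tensoring_Lt_bound {Ω : Type*} [MeasurableSpace Ω] (μ : Measure Ω)
    [IsProbabilityMeasure μ]
    {d r n m : ℕ} (t : ℕ) (ht : 2 ≤ t) (hteven : Even t)
    (ε δ : ℝ) (hε0 : 0 < ε) (hε : ε ≤ 1 / 5) (hδ0 : 0 < δ) (hδ1 : δ < 1)
    (S : Ω → Matrix (Fin d) (Fin r) ℝ) (hSmeas : ∀ i j, Measurable fun ω => S ω i j)
    (hJL : ApproxBilinear μ ε δ t S) (hJL2 : ApproxBilinear μ ε δ (2 * t) S)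
    (C : Matrix (Fin n) (Fin d) ℝ) (D : Matrix (Fin m) (Fin d) ℝ) :
    Lnorm μ (t : ℝ)
        (fun ω =>
          frob (tensor2M (C * S ω) * (tensor2M (D * S ω))ᵀ - tensor2M C * (tensor2M D)ᵀ))
      ≤ Real.sqrt 5 * ε * δ ^ ((1 : ℝ) / t) * frob (tensor2M C) * frob (tensor2M D) :=
  tensoring_Lt_bound_general μ t ht ε δ hε0 hε hδ0 S hSmeas hJL hJL2 C D
end

section
/- Let t ≥ 2 be an even integer, ε ∈ (0, 1/5] and δ ∈ (0, 1). Let S be a random d×r real matrix satisfying both the (ε, δ, t)-approximate-bilinear property and the (ε, δ, 2t)-approximate-bilinear property. Then for any fixed vectors c, d ∈ ℝ^d, the random variable Y := (⟨S^⊤c, S^⊤d⟩² − ⟨c, d⟩²)² satisfies ‖Y‖_{L^{t/2}} ≤ 5 ε² δ^{2/t} ‖c‖₂⁴ ‖d‖₂⁴. -/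
open MeasureTheory Matrix
open scoped ENNReal NNReal

lemma Lnorm_eq_toReal {Ω : Type*} [MeasurableSpace Ω] (μ : Measure Ω) {q : ℝ} (hq : 0 < q)
    {X : Ω → ℝ} (hm : AEStronglyMeasurable (fun ω => |X ω| ^ q) μ) :
    Lnorm μ q X = (eLpNorm' X q μ).toReal := by
  unfold Lnorm eLpNorm'
  rw [integral_eq_lintegral_of_nonneg_ae
    (Filter.Eventually.of_forall fun ω => Real.rpow_nonneg (abs_nonneg _) q) hm]
  have h1 : ∀ ω, ENNReal.ofReal (|X ω| ^ q) = (‖X ω‖₊ : ℝ≥0∞) ^ q := by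
    intro ω
    rw [← enorm_eq_nnnorm, Real.enorm_eq_ofReal_abs]
    exact (ENNReal.ofReal_rpow_of_nonneg (abs_nonneg _) hq.le).symm
  simp_rw [h1]
  rw [ENNReal.toReal_rpow]
  rfl

lemma abs_dot_le {h : ℕ} (c d : Fin h → ℝ) : |dotProduct c d| ≤ norm2 c * norm2 d := by
  have h1 : dotProduct c d ^ 2 ≤ (∑ i, c i ^ 2) * ∑ i, d i ^ 2 :=
    Finset.sum_mul_sq_le_sq_mul_sq _ _ _
  have h2 : norm2 c * norm2 d = Real.sqrt ((∑ i, c i ^ 2) * ∑ i, d i ^ 2) := by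
    rw [norm2, norm2, ← Real.sqrt_mul (by positivity)]
  rw [h2, ← Real.sqrt_sq_eq_abs]
  exact Real.sqrt_le_sqrt h1

lemma meas_abs_rpow_nat {Ω : Type*} [MeasurableSpace Ω] {F : Ω → ℝ} (hF : Measurable F) (n : ℕ) :
    Measurable fun ω => |F ω| ^ (n : ℝ) := by
  simp_rw [Real.rpow_natCast]
  exact hF.abs.pow_const n

lemma eLpNorm'_sq {Ω : Type*} [MeasurableSpace Ω] (μ : Measure Ω) (F : Ω → ℝ) (n : ℕ)
    (hn : 0 < n) :
    eLpNorm' (fun ω => F ω ^ 2) ((n : ℕ) : ℝ) μ = (eLpNorm' F (((2*n : ℕ)) : ℝ) μ) ^ 2 := by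
  unfold eLpNorm'
  simp only [enorm_eq_nnnorm]
  have hpt : ∀ ω, ((‖F ω ^ 2‖₊ : ℝ≥0∞)) ^ ((n : ℕ) : ℝ)
      = ((‖F ω‖₊ : ℝ≥0∞)) ^ (((2*n : ℕ)) : ℝ) := by
    intro ω
    rw [nnnorm_pow, ENNReal.coe_pow, ENNReal.rpow_natCast, ENNReal.rpow_natCast, ← pow_mul]
  simp_rw [hpt]
  rw [← ENNReal.rpow_natCast (_ ^ (1 / ((2*n : ℕ) : ℝ))) 2, ← ENNReal.rpow_mul]
  congr 1
  have : (n:ℝ) ≠ 0 := Nat.cast_ne_zero.mpr hn.ne'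
  push_cast
  field_simp

set_option maxHeartbeats 2000000

theorem single_pair_squared_error_bound {Ω : Type*} [MeasurableSpace Ω] (μ : Measure Ω)
    [IsProbabilityMeasure μ]
    {h r : ℕ} (t : ℕ) (ht : 2 ≤ t) (hteven : Even t)
    (ε δ : ℝ) (hε0 : 0 < ε) (hε : ε ≤ 1 / 5) (hδ0 : 0 < δ) (hδ1 : δ < 1)
    (S : Ω → Matrix (Fin h) (Fin r) ℝ) (hSmeas : ∀ i j, Measurable fun ω => S ω i j)
    (hJL : ApproxBilinear μ ε δ t S) (hJL2 : ApproxBilinear μ ε δ (2 * t) S)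
    (c d : Fin h → ℝ) :
    Lnorm μ ((t : ℝ) / 2)
        (fun ω =>
          (dotProduct ((S ω)ᵀ *ᵥ c) ((S ω)ᵀ *ᵥ d) ^ 2 - dotProduct c d ^ 2) ^ 2)
      ≤ 5 * ε ^ 2 * δ ^ ((2 : ℝ) / t) * norm2 c ^ 4 * norm2 d ^ 4 := by
  have htn : 0 < t := by omega
  obtain ⟨m, hmm⟩ := hteven
  have hm2 : t = 2 * m := by omega
  have hmpos : 0 < m := by omega
  have htR : (0:ℝ) < (t:ℝ) := by exact_mod_cast htn
  have hmR : (0:ℝ) < ((m:ℕ):ℝ) := by exact_mod_cast hmpos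
  set p := dotProduct c d with hp
  set nc := norm2 c with hncdef
  set nd := norm2 d with hnddef
  have hnc0 : 0 ≤ nc := Real.sqrt_nonneg _
  have hnd0 : 0 ≤ nd := Real.sqrt_nonneg _
  set Z : Ω → ℝ := fun ω => dotProduct ((S ω)ᵀ *ᵥ c) ((S ω)ᵀ *ᵥ d) - p with hZdef
  set W : Ω → ℝ := fun ω => Z ω ^ 2 + 2 * p * Z ω with hWdef
  have hZmeas : Measurable Z := by
    have hZeq : Z = fun ω => (∑ j, (∑ i, S ω i j * c i) * (∑ i, S ω i j * d i)) - p := by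
      funext ω
      simp [hZdef, dotProduct, Matrix.mulVec, Matrix.transpose_apply]
    rw [hZeq]
    apply Measurable.sub _ measurable_const
    apply Finset.measurable_sum
    intro j _
    exact (Finset.measurable_sum _ fun i _ => (hSmeas i j).mul_const _).mul
      (Finset.measurable_sum _ fun i _ => (hSmeas i j).mul_const _)
  have hWmeas : Measurable W := by
    rw [hWdef]; exact (hZmeas.pow_const 2).add (hZmeas.const_mul _)
  have hfun : (fun ω => (dotProduct ((S ω)ᵀ *ᵥ c) ((S ω)ᵀ *ᵥ d) ^ 2 - p ^ 2) ^ 2)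
      = fun ω => (W ω) ^ 2 := by
    funext ω
    rw [hWdef, hZdef]
    ring
  rw [hfun]
  have hq2 : (t:ℝ)/2 = ((m:ℕ):ℝ) := by rw [hm2]; push_cast; ring
  rw [hq2, Lnorm_eq_toReal μ hmR ((meas_abs_rpow_nat (hWmeas.pow_const 2) m).aestronglyMeasurable),
    eLpNorm'_sq μ W m hmpos, show (2*m : ℕ) = t from hm2.symm, ENNReal.toReal_pow]
  set D := δ ^ ((1:ℝ)/(t:ℝ)) with hDdef
  have hD0 : 0 < D := Real.rpow_pos_of_pos hδ0 _
  have hDD : δ ^ ((2:ℝ)/(t:ℝ)) = D * D := by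
    rw [hDdef, ← Real.rpow_add hδ0]
    congr 1
    field_simp
    norm_num
  have h2tR : (0:ℝ) < ((2*t : ℕ):ℝ) := by exact_mod_cast (by omega : 0 < 2*t)
  have key : (eLpNorm' W ((t:ℕ):ℝ) μ).toReal ≤ (ε^2 + 2*ε) * D * nc^2 * nd^2 := by
    by_cases hfin : eLpNorm' Z ((2*t : ℕ):ℝ) μ = ∞
    · -- the L^t norm of W is infinite, so its toReal is 0
      have hB2 : (∫⁻ ω, (‖Z ω‖₊ : ℝ≥0∞) ^ (2*t : ℕ) ∂μ) = ∞ := by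
        unfold eLpNorm' at hfin
        rw [ENNReal.rpow_eq_top_iff_of_pos (by positivity)] at hfin
        simpa only [ENNReal.rpow_natCast, enorm_eq_nnnorm] using hfin
      have hpoint : ∀ ω, (‖Z ω‖₊ : ℝ≥0∞) ^ (2*t : ℕ)
          ≤ ENNReal.ofReal (2^t) * (‖W ω‖₊ : ℝ≥0∞) ^ t + ENNReal.ofReal ((4* |p|)^(2*t)) := by
        intro ω
        have habs : |Z ω| * (|Z ω| - 2* |p|) ≤ |W ω| := by
          have h1 := abs_add_le (Z ω ^ 2 + 2*p*Z ω) (-(2*p*Z ω))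
          simp only [add_neg_cancel_right, abs_neg] at h1
          have h2 : |Z ω ^ 2| = |Z ω|^2 := abs_pow _ _
          have h3 : |2*p*Z ω| = 2* |p| * |Z ω| := by
            rw [abs_mul, abs_mul, abs_two]
          have h4 : |W ω| = |Z ω ^ 2 + 2*p*Z ω| := by rw [hWdef]
          nlinarith [abs_nonneg (Z ω), abs_nonneg p]
        have hreal : |Z ω| ^ (2*t) ≤ 2^t * |W ω|^t + (4* |p|)^(2*t) := by
          rcases le_total (|Z ω|) (4* |p|) with hc | hc
          · have h1 := pow_le_pow_left₀ (abs_nonneg _) hc (2*t)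
            have h2 : (0:ℝ) ≤ 2^t * |W ω|^t := by positivity
            linarith
          · have hzq : |Z ω|^2/2 ≤ |W ω| := by
              nlinarith [abs_nonneg (Z ω), abs_nonneg p]
            have h4 : (|Z ω|^2/2)^t ≤ |W ω|^t := pow_le_pow_left₀ (by positivity) hzq t
            have h5 : |Z ω|^(2*t) = 2^t * (|Z ω|^2/2)^t := by
              rw [div_pow, pow_mul]
              field_simp
            have h6 : (0:ℝ) ≤ (4* |p|)^(2*t) := by positivity
            have h7 : (0:ℝ) ≤ (2:ℝ)^t := by positivity
            nlinarith [mul_le_mul_of_nonneg_left h4 h7]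
        calc (‖Z ω‖₊ : ℝ≥0∞) ^ (2*t) = ENNReal.ofReal (|Z ω| ^ (2*t)) := by
              rw [← enorm_eq_nnnorm, Real.enorm_eq_ofReal_abs, ← ENNReal.ofReal_pow (abs_nonneg _)]
          _ ≤ ENNReal.ofReal (2^t * |W ω|^t + (4* |p|)^(2*t)) := ENNReal.ofReal_le_ofReal hreal
          _ = _ := by
              rw [ENNReal.ofReal_add (by positivity) (by positivity),
                ENNReal.ofReal_mul (by positivity), ENNReal.ofReal_pow (abs_nonneg _),
                ← enorm_eq_nnnorm, Real.enorm_eq_ofReal_abs]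
      have hlin : (∫⁻ ω, (‖Z ω‖₊ : ℝ≥0∞) ^ (2*t : ℕ) ∂μ)
          ≤ ENNReal.ofReal (2^t) * (∫⁻ ω, (‖W ω‖₊:ℝ≥0∞)^t ∂μ)
            + ENNReal.ofReal ((4* |p|)^(2*t)) := by
        calc (∫⁻ ω, (‖Z ω‖₊ : ℝ≥0∞) ^ (2*t : ℕ) ∂μ)
            ≤ ∫⁻ ω, (ENNReal.ofReal (2^t) * (‖W ω‖₊:ℝ≥0∞)^t
                + ENNReal.ofReal ((4* |p|)^(2*t))) ∂μ := lintegral_mono hpoint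
          _ = _ := by
              rw [lintegral_add_right _ measurable_const,
                lintegral_const_mul (f := fun ω => (‖W ω‖₊:ℝ≥0∞)^t) _ (hWmeas.enorm.pow_const t), lintegral_const,
                measure_univ, mul_one]
      have hWint : (∫⁻ ω, (‖W ω‖₊:ℝ≥0∞)^t ∂μ) = ∞ := by
        by_contra hcon
        rw [hB2] at hlin
        exact (ENNReal.add_ne_top.mpr
          ⟨ENNReal.mul_ne_top ENNReal.ofReal_ne_top hcon, ENNReal.ofReal_ne_top⟩)
          (top_le_iff.mp hlin)
      have hWinf : eLpNorm' W ((t:ℕ):ℝ) μ = ∞ := by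
        unfold eLpNorm'
        rw [ENNReal.rpow_eq_top_iff_of_pos (by positivity)]
        simpa only [ENNReal.rpow_natCast, enorm_eq_nnnorm] using hWint
      rw [hWinf]
      simp only [ENNReal.toReal_top]
      positivity
    · -- finite case
      have hJ2 : Lnorm μ ((2*t : ℕ):ℝ) Z ≤ ε * δ ^ ((1:ℝ)/((2*t : ℕ):ℝ)) * nc * nd := hJL2 c d
      rw [Lnorm_eq_toReal μ h2tR ((meas_abs_rpow_nat hZmeas (2*t)).aestronglyMeasurable)] at hJ2
      have hb1 : eLpNorm' Z ((2*t : ℕ):ℝ) μ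
          ≤ ENNReal.ofReal (ε * δ ^ ((1:ℝ)/((2*t : ℕ):ℝ)) * nc * nd) := by
        rw [ENNReal.le_ofReal_iff_toReal_le hfin (by positivity)]
        exact hJ2
      have hJ1 : Lnorm μ ((t:ℕ):ℝ) Z ≤ ε * δ ^ ((1:ℝ)/((t:ℕ):ℝ)) * nc * nd := hJL c d
      rw [Lnorm_eq_toReal μ htR ((meas_abs_rpow_nat hZmeas t).aestronglyMeasurable)] at hJ1
      have hB2fin : (∫⁻ ω, (‖Z ω‖₊:ℝ≥0∞) ^ ((2*t : ℕ):ℝ) ∂μ) ≠ ∞ := by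
        intro hcon
        apply hfin
        unfold eLpNorm'
        rw [ENNReal.rpow_eq_top_iff_of_pos (by positivity)]
        exact hcon
      have htfin : eLpNorm' Z ((t:ℕ):ℝ) μ ≠ ∞ := by
        unfold eLpNorm'
        apply ENNReal.rpow_ne_top_of_nonneg (by positivity)
        have hpt : ∀ ω, (‖Z ω‖₊:ℝ≥0∞) ^ ((t:ℕ):ℝ) ≤ (‖Z ω‖₊:ℝ≥0∞) ^ ((2*t : ℕ):ℝ) + 1 := by
          intro ω
          rw [ENNReal.rpow_natCast, ENNReal.rpow_natCast]
          rcases le_total ((‖Z ω‖₊:ℝ≥0∞)) 1 with hc | hc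
          · calc (‖Z ω‖₊:ℝ≥0∞)^t ≤ 1^t := pow_le_pow_left' hc t
              _ = 1 := one_pow t
              _ ≤ _ := le_add_self
          · calc (‖Z ω‖₊:ℝ≥0∞)^t ≤ (‖Z ω‖₊:ℝ≥0∞)^(2*t) := pow_le_pow_right' hc (by omega)
              _ ≤ _ := le_self_add
        have hle : (∫⁻ ω, (‖Z ω‖₊:ℝ≥0∞) ^ ((t:ℕ):ℝ) ∂μ)
            ≤ (∫⁻ ω, (‖Z ω‖₊:ℝ≥0∞) ^ ((2*t : ℕ):ℝ) ∂μ) + 1 := by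
          calc (∫⁻ ω, (‖Z ω‖₊:ℝ≥0∞) ^ ((t:ℕ):ℝ) ∂μ)
              ≤ ∫⁻ ω, ((‖Z ω‖₊:ℝ≥0∞) ^ ((2*t : ℕ):ℝ) + 1) ∂μ := lintegral_mono hpt
            _ = _ := by
                rw [lintegral_add_right _ measurable_const, lintegral_const, measure_univ,
                  mul_one]
        exact ne_top_of_le_ne_top (ENNReal.add_ne_top.mpr ⟨hB2fin, ENNReal.one_ne_top⟩) hle
      have hb2 : eLpNorm' Z ((t:ℕ):ℝ) μ
          ≤ ENNReal.ofReal (ε * δ ^ ((1:ℝ)/((t:ℕ):ℝ)) * nc * nd) := by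
        rw [ENNReal.le_ofReal_iff_toReal_le htfin (by positivity)]
        exact hJ1
      have h1t : (1:ℝ) ≤ ((t:ℕ):ℝ) := by exact_mod_cast htn
      have heq : W = (fun ω => Z ω ^ 2) + (2*p) • Z := by
        funext ω
        simp only [hWdef, Pi.add_apply, Pi.smul_apply, smul_eq_mul]
      have htri : eLpNorm' W ((t:ℕ):ℝ) μ
          ≤ eLpNorm' (fun ω => Z ω ^ 2) ((t:ℕ):ℝ) μ + eLpNorm' ((2*p) • Z) ((t:ℕ):ℝ) μ := by
        rw [heq]
        exact eLpNorm'_add_le ((hZmeas.pow_const 2).aestronglyMeasurable)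
          ((hZmeas.const_smul (2*p)).aestronglyMeasurable) h1t
      have hZ2eq : eLpNorm' (fun ω => Z ω ^ 2) ((t:ℕ):ℝ) μ
          = (eLpNorm' Z ((2*t : ℕ):ℝ) μ)^2 := eLpNorm'_sq μ Z t htn
      have hsmul : eLpNorm' ((2*p) • Z) ((t:ℕ):ℝ) μ
          = ENNReal.ofReal (2* |p|) * eLpNorm' Z ((t:ℕ):ℝ) μ := by
        rw [eLpNorm'_const_smul (2*p) (by positivity : (0:ℝ) < ((t:ℕ):ℝ))]
        congr 1
        rw [Real.enorm_eq_ofReal_abs, abs_mul, abs_two]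
      have hcomb : eLpNorm' W ((t:ℕ):ℝ) μ
          ≤ ENNReal.ofReal ((ε * δ ^ ((1:ℝ)/((2*t : ℕ):ℝ)) * nc * nd)^2
              + (2* |p|) * (ε * δ ^ ((1:ℝ)/((t:ℕ):ℝ)) * nc * nd)) := by
        calc eLpNorm' W ((t:ℕ):ℝ) μ
            ≤ eLpNorm' (fun ω => Z ω ^ 2) ((t:ℕ):ℝ) μ
              + eLpNorm' ((2*p) • Z) ((t:ℕ):ℝ) μ := htri
          _ ≤ ENNReal.ofReal (ε * δ ^ ((1:ℝ)/((2*t : ℕ):ℝ)) * nc * nd) ^ 2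
              + ENNReal.ofReal (2* |p|)
                * ENNReal.ofReal (ε * δ ^ ((1:ℝ)/((t:ℕ):ℝ)) * nc * nd) := by
            rw [hZ2eq, hsmul]
            gcongr
          _ = _ := by
            rw [← ENNReal.ofReal_pow (by positivity), ← ENNReal.ofReal_mul (by positivity),
              ← ENNReal.ofReal_add (by positivity) (by positivity)]
      have hfinal := ENNReal.toReal_le_of_le_ofReal (by positivity) hcomb
      calc (eLpNorm' W ((t:ℕ):ℝ) μ).toReal
          ≤ (ε * δ ^ ((1:ℝ)/((2*t : ℕ):ℝ)) * nc * nd)^2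
            + (2* |p|) * (ε * δ ^ ((1:ℝ)/((t:ℕ):ℝ)) * nc * nd) := hfinal
        _ ≤ (ε^2 + 2*ε) * D * nc^2 * nd^2 := by
          have hpp : |p| ≤ nc * nd := abs_dot_le c d
          have hhalf : δ ^ ((1:ℝ)/((2*t : ℕ):ℝ)) * δ ^ ((1:ℝ)/((2*t : ℕ):ℝ)) = D := by
            rw [hDdef, ← Real.rpow_add hδ0]
            congr 1
            push_cast
            ring
          have e1 : (ε * δ ^ ((1:ℝ)/((2*t : ℕ):ℝ)) * nc * nd)^2
              = ε^2 * (δ ^ ((1:ℝ)/((2*t : ℕ):ℝ)) * δ ^ ((1:ℝ)/((2*t : ℕ):ℝ)))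
                * nc^2 * nd^2 := by ring
          rw [e1, hhalf, hDdef]
          nlinarith [mul_le_mul_of_nonneg_left hpp
            (show (0:ℝ) ≤ 2*(ε*(δ^((1:ℝ)/(t:ℝ)))*(nc*nd)) by positivity),
            Real.rpow_pos_of_pos hδ0 ((1:ℝ)/(t:ℝ)), mul_nonneg hnc0 hnd0]

  calc (eLpNorm' W ((t:ℕ):ℝ) μ).toReal ^ 2 ≤ ((ε^2 + 2*ε) * D * nc^2 * nd^2) ^ 2 := by
        have h5 : (0:ℝ) ≤ (ε^2 + 2*ε) * D * nc^2 * nd^2 := by positivity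
        exact pow_le_pow_left₀ ENNReal.toReal_nonneg key 2
    _ = (ε^2+2*ε)^2 * ((D*D) * nc^4 * nd^4) := by ring
    _ ≤ (5*ε^2) * ((D*D) * nc^4 * nd^4) := by
        have h5 : (ε^2+2*ε)^2 ≤ 5*ε^2 := by
          nlinarith [mul_pos hε0 hε0, sq_nonneg ε, mul_le_mul_of_nonneg_left hε hε0.le,
            mul_le_mul_of_nonneg_left hε (mul_pos hε0 hε0).le,
            mul_le_mul_of_nonneg_left hε (mul_pos (mul_pos hε0 hε0) hε0).le]
        exact mul_le_mul_of_nonneg_right h5 (by positivity)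
    _ = 5 * ε^2 * δ^((2:ℝ)/(t:ℝ)) * nc^4 * nd^4 := by rw [hDD]; ring
end

section
/- Let n = t · b for positive integers t, b, and let A, B ∈ ℝ^{n×m} and C ∈ ℝ^{n×k}. Denote by a_i, b_i, c_i the i-th rows of A, B, C. For l ∈ [t] let B_l = {(l−1)b+1, …, lb}, let A_l, B_l, C_l be the submatrices of A, B, C consisting of the rows with indices in the l-th block, let Z_l := ∑_{j ≤ (l−1)b} b_j c_j^⊤ ∈ ℝ^{m×k}, and let P_l := lt(A_l B_l^⊤) C_l ∈ ℝ^{b×k}. Then for every l ∈ [t] and every i = (l−1)b + i' with i' ∈ [b], the i-th row of lt(A B^⊤) C equals the i'-th row of P_l plus a_i^⊤ Z_l. -/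
open Matrix

/-- Lower-triangular part of a square matrix: keep entries `M i j` with `j ≤ i`, zero the rest. -/
def ltMat {N : ℕ} (M : Matrix (Fin N) (Fin N) ℝ) : Matrix (Fin N) (Fin N) ℝ :=
  Matrix.of fun i j => if (j : ℕ) ≤ (i : ℕ) then M i j else 0

/-- The global index of the `i'`-th row within the `l`-th block of size `b`. -/
def blockIdx {t b : ℕ} (l : Fin t) (i' : Fin b) : Fin (t * b) :=
  ⟨l.1 * b + i'.1, by
    calc l.1 * b + i'.1 < l.1 * b + b := by omega
      _ = (l.1 + 1) * b := by ring
      _ ≤ t * b := Nat.mul_le_mul_right b l.2⟩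

/-!
Row `i` of `lt(A Bᵀ) C` is `∑_{j ≤ i} (aᵢ ⬝ bⱼ) cⱼ`. For `i` in block `l`, the indices `j ≤ i` split
into those of earlier blocks, whose contribution is `aᵢᵀ Z_l` by linearity of `aᵢ ᵥ* ·`, and those
`j = blockIdx l j'` with `j' ≤ i'`, which give row `i'` of `P_l`.
-/

open Finset

lemma ltMat_mul_row {N k : ℕ} (M : Matrix (Fin N) (Fin N) ℝ) (C : Matrix (Fin N) (Fin k) ℝ)
    (i : Fin N) :
    (ltMat M * C) i = ∑ j ∈ univ.filter (fun j : Fin N => (j : ℕ) ≤ i), M i j • C j := by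
  ext c
  simp [mul_apply, ltMat, Finset.sum_apply, sum_filter, ite_mul]

@[simp]
lemma val_blockIdx {t b : ℕ} (l : Fin t) (i' : Fin b) : (blockIdx l i' : ℕ) = l * b + i' := rfl

lemma blockIdx_injective {t b : ℕ} (l : Fin t) : Function.Injective (blockIdx (b := b) l) := by
  intro j₁ j₂ h
  ext
  simpa using congrArg Fin.val h

lemma filter_le_blockIdx {t b : ℕ} (l : Fin t) (i' : Fin b) :
    univ.filter (fun j : Fin (t * b) => (j : ℕ) ≤ blockIdx l i') =
      univ.filter (fun j : Fin (t * b) => (j : ℕ) < l.1 * b) ∪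
        (univ.filter (fun j' : Fin b => (j' : ℕ) ≤ i')).image (blockIdx l) := by
  ext j
  simp only [mem_union, mem_filter, mem_univ, true_and, mem_image]
  simp only [Fin.ext_iff, val_blockIdx]
  constructor
  · intro hj
    by_cases hlt : (j : ℕ) < l.1 * b
    · exact Or.inl hlt
    · refine Or.inr ⟨⟨(j : ℕ) - l.1 * b, by omega⟩, ?_, ?_⟩ <;> dsimp only <;> omega
  · rintro (hj | ⟨j', hj', hj⟩) <;> omega

lemma sum_le_blockIdx {M : Type*} [AddCommMonoid M] {t b : ℕ} (l : Fin t) (i' : Fin b)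
    (F : Fin (t * b) → M) :
    ∑ j ∈ univ.filter (fun j : Fin (t * b) => (j : ℕ) ≤ blockIdx l i'), F j =
      ∑ j' ∈ univ.filter (fun j' : Fin b => (j' : ℕ) ≤ i'), F (blockIdx l j') +
        ∑ j ∈ univ.filter (fun j : Fin (t * b) => (j : ℕ) < l.1 * b), F j := by
  rw [filter_le_blockIdx, sum_union, sum_image (blockIdx_injective l).injOn, add_comm]
  rw [disjoint_left]
  intro j hj hj'
  obtain ⟨j', -, rfl⟩ := mem_image.mp hj'
  simp at hj

theorem block_lower_triangular_multiplication {t b m k : ℕ}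
    (A B : Matrix (Fin (t * b)) (Fin m) ℝ) (C : Matrix (Fin (t * b)) (Fin k) ℝ)
    (Z : Fin t → Matrix (Fin m) (Fin k) ℝ)
    (hZ : ∀ l : Fin t, Z l =
      ∑ j ∈ Finset.univ.filter (fun j : Fin (t * b) => (j : ℕ) < l.1 * b),
        vecMulVec (B j) (C j))
    (P : Fin t → Matrix (Fin b) (Fin k) ℝ)
    (hP : ∀ l : Fin t, P l =
      ltMat (Matrix.of (fun i' : Fin b => A (blockIdx l i'))
          * (Matrix.of (fun i' : Fin b => B (blockIdx l i')))ᵀ)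
        * Matrix.of (fun i' : Fin b => C (blockIdx l i')))
    (l : Fin t) (i' : Fin b) :
    (ltMat (A * Bᵀ) * C) (blockIdx l i') = P l i' + A (blockIdx l i') ᵥ* Z l := by
  rw [ltMat_mul_row, sum_le_blockIdx l i', hP, ltMat_mul_row, hZ, vecMul_sum]
  simp only [vecMul_vecMulVec]
  rfl
end
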